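/- Let I : [0,∞) → ℝ be a nonnegative C¹ function satisfying I'(t) ≤ C·I(t) - C·I(t)² for a constant C > 0, and suppose ∫₀^∞ I(t) dt < ∞. Then I(t) → 0 as t → ∞. -/

import Mathlib

/-!
Since `C·I² ≥ 0`, the differential inequality gives `I' ≤ C·I`, so by Grönwall
`I t ≤ e^C · I s` whenever `s ≤ t ≤ s + 1`. Averaging over `s ∈ [t - 1, t]` yields
`I t ≤ e^C ∫_{t-1}^t I`, and these window integrals tend to `0` because `I` is integrable.
-/

open MeasureTheory Set Filter Topology Real

theorem le_mul_exp_of_deriv_le_mul {f f' : ℝ → ℝ} {K a b : ℝ}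
    (hf : ∀ x ∈ Icc a b, HasDerivAt f (f' x) x) (bound : ∀ x ∈ Icc a b, f' x ≤ K * f x)
    (hab : a ≤ b) : f b ≤ f a * exp (K * (b - a)) := by
  rw [← gronwallBound_ε0]
  refine le_gronwallBound_of_liminf_deriv_right_le
    (fun x hx => (hf x hx).continuousAt.continuousWithinAt)
    (fun x hx _ hr => (hf x (Ico_subset_Icc_self hx)).hasDerivWithinAt.liminf_right_slope_le hr)
    le_rfl (fun x hx => by simpa using bound x (Ico_subset_Icc_self hx)) b ⟨hab, le_rfl⟩

theorem tendsto_intervalIntegral_sub_const_atTop {E : Type*} [NormedAddCommGroup E]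
    [NormedSpace ℝ E] {f : ℝ → E} {a : ℝ} (hf : IntegrableOn f (Ioi a)) (δ : ℝ) :
    Tendsto (fun t => ∫ x in (t - δ)..t, f x) atTop (𝓝 0) := by
  have hlim := intervalIntegral_tendsto_integral_Ioi a hf tendsto_id
  have hshift : Tendsto (fun t : ℝ => t - δ) atTop atTop :=
    tendsto_atTop_add_const_right _ _ tendsto_id
  have hint : ∀ t, a ≤ t → IntervalIntegrable f volume a t := fun t ht =>
    (intervalIntegrable_iff_integrableOn_Ioc_of_le ht).2 (hf.mono_set Ioc_subset_Ioi_self)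
  refine (sub_self (∫ x in Ioi a, f x) ▸ hlim.sub (hlim.comp hshift)).congr' ?_
  filter_upwards [eventually_ge_atTop a, hshift.eventually (eventually_ge_atTop a)] with t ht htδ
  exact intervalIntegral.integral_interval_sub_left (hint t ht) (hint _ htδ)

theorem tendsto_zero_of_integrableOn_of_le_mul {f : ℝ → ℝ} {a δ c : ℝ} (hδ : 0 < δ)
    (hf : IntegrableOn f (Ioi a)) (hnonneg : ∀ᶠ t in atTop, 0 ≤ f t)
    (hle : ∀ᶠ t in atTop, ∀ s ∈ Icc (t - δ) t, f t ≤ c * f s) :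
    Tendsto f atTop (𝓝 0) := by
  have hwin := (tendsto_intervalIntegral_sub_const_atTop hf δ).const_mul (c / δ)
  rw [mul_zero] at hwin
  refine squeeze_zero' hnonneg ?_ hwin
  filter_upwards [hle, eventually_ge_atTop (a + δ)] with t hle ht
  have hint : IntervalIntegrable f volume (t - δ) t :=
    (intervalIntegrable_iff_integrableOn_Ioc_of_le (by linarith)).2
      (hf.mono_set (Ioc_subset_Ioi_self.trans (Ioi_subset_Ioi (by linarith))))
  have hmean : δ * f t ≤ c * ∫ x in (t - δ)..t, f x := by
    calc δ * f t = ∫ _ in (t - δ)..t, f t := by simp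
      _ ≤ ∫ x in (t - δ)..t, c * f x :=
        intervalIntegral.integral_mono_on (by linarith) intervalIntegrable_const
          (hint.const_mul c) hle
      _ = c * ∫ x in (t - δ)..t, f x := intervalIntegral.integral_const_mul c _
  rwa [div_mul_eq_mul_div, le_div_iff₀' hδ]

theorem stmt_2_general (I I' : ℝ → ℝ) (C : ℝ) (hC : 0 < C)
    (hderiv : ∀ t ∈ Set.Ici (0 : ℝ), HasDerivAt I (I' t) t)
    (hnonneg : ∀ t ∈ Set.Ici (0 : ℝ), 0 ≤ I t)
    (hode : ∀ t ∈ Set.Ici (0 : ℝ), I' t ≤ C * I t - C * (I t) ^ 2)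
    (hint : MeasureTheory.IntegrableOn I (Set.Ici (0 : ℝ))) :
    Filter.Tendsto I Filter.atTop (nhds 0) := by
  have hgrowth : ∀ t ∈ Ici (0 : ℝ), I' t ≤ C * I t := fun t ht =>
    (hode t ht).trans (by nlinarith [hnonneg t ht])
  refine tendsto_zero_of_integrableOn_of_le_mul (c := exp C) one_pos
    (hint.mono_set Ioi_subset_Ici_self) ((eventually_ge_atTop 0).mono hnonneg) ?_
  filter_upwards [eventually_ge_atTop 1] with t ht s hs
  have hs0 : 0 ≤ s := by linarith [hs.1]
  calc I t ≤ I s * exp (C * (t - s)) :=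
        le_mul_exp_of_deriv_le_mul (fun x hx => hderiv x (hs0.trans hx.1))
          (fun x hx => hgrowth x (hs0.trans hx.1)) hs.2
    _ ≤ I s * exp C := by
        gcongr
        · exact hnonneg s hs0
        · exact mul_le_of_le_one_right hC.le (by linarith [hs.1])
    _ = exp C * I s := mul_comm _ _

/-- Donaldson–Kronheimer Prop. 6.2.14 technique: a nonnegative `C¹` function `I` on `[0,∞)`
with `I' ≤ C·I - C·I²` and finite total integral tends to `0` at infinity. -/
theorem stmt_2 (I I' : ℝ → ℝ) (C : ℝ) (hC : 0 < C)
    (hderiv : ∀ t ∈ Set.Ici (0 : ℝ), HasDerivAt I (I' t) t)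
    (hcont : ContinuousOn I' (Set.Ici (0 : ℝ)))
    (hnonneg : ∀ t ∈ Set.Ici (0 : ℝ), 0 ≤ I t)
    (hode : ∀ t ∈ Set.Ici (0 : ℝ), I' t ≤ C * I t - C * (I t) ^ 2)
    (hint : MeasureTheory.IntegrableOn I (Set.Ici (0 : ℝ))) :
    Filter.Tendsto I Filter.atTop (nhds 0) :=
  stmt_2_general I I' C hC hderiv hnonneg hode hint
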